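/- With η := φψ as above, the generators are related by L_Z f = (1/η) L_Y*(η f) for all f ∈ C²_c(G), where L_Y is the generator of the Ψ-controlled process and L_Z the generator of the Φ-controlled process. -/

import Mathlib

/-!
The Leibniz rule for a second-order operator `M h = B·Dh + (1/2)tr[a D²h] − V h` with symmetric
`a` reads `M(g f) = f·M g + g·(B·Df + (1/2)tr[a D²f]) + Df·aDg`. Apply it to `L_Y*` with `g = η`.
The function `η = φψ` is annihilated by `L_Y*`: a direct computation gives
`L_Y*(φψ) = ψ·(L*φ + λφ) − φ·(Lψ + λψ) = 0`. Hence `(1/η) L_Y*(η f)` is a first- and second-order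
operator in `f` whose drift is `β − aDψ/ψ + aDη/η = β + aDφ/φ = β − aDΦ`, i.e. it is `L_Z f`.
-/

open Matrix

/-- Partial derivative `∂f/∂x_i` of `f : ℝ^d → ℝ`. -/
noncomputable def pd {d : ℕ} (f : (Fin d → ℝ) → ℝ) (i : Fin d) (x : Fin d → ℝ) : ℝ :=
  fderiv ℝ f x (Pi.single i 1)

/-- Gradient of `f : ℝ^d → ℝ`. -/
noncomputable def grad {d : ℕ} (f : (Fin d → ℝ) → ℝ) (x : Fin d → ℝ) : Fin d → ℝ :=
  fun i => pd f i x

/-- Second partial derivative `∂²f/∂x_i∂x_j`. -/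
noncomputable def pd2 {d : ℕ} (f : (Fin d → ℝ) → ℝ) (i j : Fin d) (x : Fin d → ℝ) : ℝ :=
  pd (pd f j) i x

/-- Hessian matrix of `f : ℝ^d → ℝ`. -/
noncomputable def hess {d : ℕ} (f : (Fin d → ℝ) → ℝ) (x : Fin d → ℝ) :
    Matrix (Fin d) (Fin d) ℝ :=
  Matrix.of fun i j => pd2 f i j x


/-- The drift `β` of the formal adjoint `L*`: `β_i = −b_i + Σ_j ∂_j a_{ij}`. -/
noncomputable def betaOf {d : ℕ} (a : (Fin d → ℝ) → Matrix (Fin d) (Fin d) ℝ)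
    (b : (Fin d → ℝ) → (Fin d → ℝ)) (x : Fin d → ℝ) : Fin d → ℝ :=
  fun i => -(b x i) + ∑ j, pd (fun y => a y i j) j x

/-- The zeroth order coefficient of `L*`:
`c = −(1/2)Σ_{i,j} ∂_i∂_j a_{ij} + Σ_i ∂_i b_i`. -/
noncomputable def cOf {d : ℕ} (a : (Fin d → ℝ) → Matrix (Fin d) (Fin d) ℝ)
    (b : (Fin d → ℝ) → (Fin d → ℝ)) (x : Fin d → ℝ) : ℝ :=
  -(1 / 2) * ∑ i, ∑ j, pd2 (fun y => a y i j) i j x + ∑ i, pd (fun y => b y i) i x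

/-- The formal adjoint `L_Y*` of the generator `L_Y f = b·Df − Df·aDΨ + (1/2)tr[a D²f]`
of the `Ψ`-controlled process:
`L_Y* h = β̂·Dh + (1/2)tr[a D²h] − ĉ h` with `β̂_i = −b_i − (aDψ)_i/ψ + Σ_j ∂_j a_{ij}` and
`ĉ = c − Σ_{i,j} ∂_i(a_{ij}Ψ_{x_j})`, where `Ψ = −log ψ`. -/
noncomputable def LYstar {d : ℕ} (a : (Fin d → ℝ) → Matrix (Fin d) (Fin d) ℝ)
    (b : (Fin d → ℝ) → (Fin d → ℝ)) (ψ : (Fin d → ℝ) → ℝ)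
    (h : (Fin d → ℝ) → ℝ) (x : Fin d → ℝ) : ℝ :=
  (fun i => -(b x i) - (a x).mulVec (grad ψ x) i / ψ x
      + ∑ j, pd (fun y => a y i j) j x) ⬝ᵥ grad h x
    + (1 / 2) * (a x * hess h x).trace
    - (cOf a b x
        - ∑ i, ∑ j, pd (fun y => a y i j * pd (fun z => -Real.log (ψ z)) j y) i x) * h x

open Filter Topology

lemma ContDiffAt.eventually_differentiableAt {𝕜 E F : Type*} [NontriviallyNormedField 𝕜]
    [NormedAddCommGroup E] [NormedSpace 𝕜 E] [NormedAddCommGroup F] [NormedSpace 𝕜 F]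
    {f : E → F} {x : E} (hf : ContDiffAt 𝕜 2 f x) : ∀ᶠ y in 𝓝 x, DifferentiableAt 𝕜 f y :=
  (hf.eventually (by simp)).mono fun _ hy => hy.differentiableAt (by norm_num)

lemma Matrix.IsSymm.mulVec_dotProduct {n R : Type*} [Fintype n] [CommSemiring R]
    {A : Matrix n n R} (hA : A.IsSymm) (u v : n → R) : A *ᵥ u ⬝ᵥ v = u ⬝ᵥ A *ᵥ v := by
  have hvA : v ᵥ* A = A *ᵥ v := by rw [← vecMul_transpose, hA.eq]
  rw [dotProduct_comm, dotProduct_mulVec, hvA, dotProduct_comm]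

lemma Matrix.trace_mul_vecMulVec {n R : Type*} [Fintype n] [CommSemiring R] (A : Matrix n n R)
    (u v : n → R) : (A * vecMulVec u v).trace = A *ᵥ u ⬝ᵥ v := by
  rw [mul_vecMulVec, trace_vecMulVec]

section PartialDerivatives

variable {d : ℕ} {f g : (Fin d → ℝ) → ℝ} {x : Fin d → ℝ}

lemma pd_congr (h : f =ᶠ[𝓝 x] g) (i : Fin d) : pd f i x = pd g i x := by
  rw [pd, pd, h.fderiv_eq]

lemma pd_add (hf : DifferentiableAt ℝ f x) (hg : DifferentiableAt ℝ g x) (i : Fin d) :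
    pd (fun y => f y + g y) i x = pd f i x + pd g i x := by
  simp [pd, fderiv_fun_add hf hg]

lemma pd_mul (hf : DifferentiableAt ℝ f x) (hg : DifferentiableAt ℝ g x) (i : Fin d) :
    pd (fun y => f y * g y) i x = pd f i x * g x + f x * pd g i x := by
  simp [pd, fderiv_fun_mul hf hg]
  ring

lemma pd_neg (i : Fin d) : pd (fun y => -f y) i x = -pd f i x := by
  simp [pd, fderiv_fun_neg]

lemma pd_comp {h : ℝ → ℝ} (hh : DifferentiableAt ℝ h (f x)) (hf : DifferentiableAt ℝ f x)
    (i : Fin d) : pd (fun y => h (f y)) i x = deriv h (f x) * pd f i x := by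
  have H : HasFDerivAt (fun y => h (f y)) (deriv h (f x) • fderiv ℝ f x) x :=
    hh.hasDerivAt.comp_hasFDerivAt x hf.hasFDerivAt
  simp [pd, H.fderiv]

lemma pd_neg_log (hf : DifferentiableAt ℝ f x) (hx : f x ≠ 0) (i : Fin d) :
    pd (fun y => -Real.log (f y)) i x = -((f x)⁻¹ * pd f i x) := by
  rw [pd_comp (h := fun t => -Real.log t) (Real.differentiableAt_log hx).neg hf, deriv.fun_neg,
    Real.deriv_log, neg_mul]

lemma pd_inv (hf : DifferentiableAt ℝ f x) (hx : f x ≠ 0) (i : Fin d) :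
    pd (fun y => (f y)⁻¹) i x = -(f x ^ 2)⁻¹ * pd f i x := by
  rw [pd_comp (differentiableAt_inv hx) hf, deriv_inv]

lemma grad_neg_log (hf : DifferentiableAt ℝ f x) (hx : f x ≠ 0) :
    grad (fun y => -Real.log (f y)) x = -((f x)⁻¹ • grad f x) :=
  funext fun i => by simp [grad, pd_neg_log hf hx]

lemma differentiableAt_pd (hf : ContDiffAt ℝ 2 f x) (i : Fin d) :
    DifferentiableAt ℝ (pd f i) x :=
  ((hf.fderiv_right (m := 1) (by norm_num)).differentiableAt (by norm_num)).clm_apply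
    (differentiableAt_const _)

lemma grad_mul (hf : DifferentiableAt ℝ f x) (hg : DifferentiableAt ℝ g x) :
    grad (fun y => f y * g y) x = g x • grad f x + f x • grad g x :=
  funext fun i => by simp [grad, pd_mul hf hg]; ring

lemma hess_mul (hf : ContDiffAt ℝ 2 f x) (hg : ContDiffAt ℝ 2 g x) :
    hess (fun y => f y * g y) x = g x • hess f x + vecMulVec (grad f x) (grad g x)
      + vecMulVec (grad g x) (grad f x) + f x • hess g x := by
  ext i j
  have hfx := hf.differentiableAt (by norm_num)
  have hgx := hg.differentiableAt (by norm_num)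
  have hpd : pd (fun y => f y * g y) j =ᶠ[𝓝 x] fun y => pd f j y * g y + f y * pd g j y := by
    filter_upwards [hf.eventually_differentiableAt, hg.eventually_differentiableAt]
      with y hfy hgy using pd_mul hfy hgy j
  simp only [hess, pd2, of_apply, Matrix.add_apply, Matrix.smul_apply, vecMulVec_apply,
    smul_eq_mul, grad]
  rw [pd_congr hpd, pd_add ((differentiableAt_pd hf j).fun_mul hgx)
    (hfx.fun_mul (differentiableAt_pd hg j)),
    pd_mul (differentiableAt_pd hf j) hgx, pd_mul hfx (differentiableAt_pd hg j)]
  ring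

end PartialDerivatives

section SecondOrderOperator

variable {d : ℕ}

noncomputable def secondOrderOp (A : Matrix (Fin d) (Fin d) ℝ) (B : Fin d → ℝ) (V : ℝ)
    (h : (Fin d → ℝ) → ℝ) (x : Fin d → ℝ) : ℝ :=
  B ⬝ᵥ grad h x + (1 / 2) * (A * hess h x).trace - V * h x

/-- The two mixed terms of `D²(g f)` merge into `Df·A Dg` because `A` is symmetric. -/
lemma secondOrderOp_mul {A : Matrix (Fin d) (Fin d) ℝ} (hA : A.IsSymm) (B : Fin d → ℝ) (V : ℝ)
    {g f : (Fin d → ℝ) → ℝ} {x : Fin d → ℝ} (hg : ContDiffAt ℝ 2 g x) (hf : ContDiffAt ℝ 2 f x) :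
    secondOrderOp A B V (fun y => g y * f y) x
      = f x * secondOrderOp A B V g x + g x * secondOrderOp A B 0 f x
        + grad f x ⬝ᵥ A *ᵥ grad g x := by
  simp only [secondOrderOp, grad_mul (hg.differentiableAt (by norm_num))
      (hf.differentiableAt (by norm_num)), hess_mul hg hf, Matrix.mul_add, Matrix.mul_smul,
    trace_add, trace_smul, trace_mul_vecMulVec, dotProduct_add, dotProduct_smul, smul_eq_mul]
  rw [hA.mulVec_dotProduct (grad f x), dotProduct_comm (A *ᵥ grad g x)]
  ring

end SecondOrderOperator

section ControlledGenerator

variable {d : ℕ} {a : (Fin d → ℝ) → Matrix (Fin d) (Fin d) ℝ} {b : (Fin d → ℝ) → (Fin d → ℝ)}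
  {ψ : (Fin d → ℝ) → ℝ} {x : Fin d → ℝ}

lemma LYstar_eq_secondOrderOp (h : (Fin d → ℝ) → ℝ) :
    LYstar a b ψ h x = secondOrderOp (a x) (betaOf a b x - (ψ x)⁻¹ • (a x *ᵥ grad ψ x))
      (cOf a b x - ∑ i, ∑ j, pd (fun y => a y i j * pd (fun z => -Real.log (ψ z)) j y) i x)
      h x := by
  simp only [LYstar, secondOrderOp]
  congr 3
  funext i
  simp only [betaOf, Pi.sub_apply, Pi.smul_apply, smul_eq_mul]
  ring

lemma LYstar_mul (hA : (a x).IsSymm) {g f : (Fin d → ℝ) → ℝ} (hg : ContDiffAt ℝ 2 g x)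
    (hf : ContDiffAt ℝ 2 f x) :
    LYstar a b ψ (fun y => g y * f y) x
      = f x * LYstar a b ψ g x
        + g x * secondOrderOp (a x) (betaOf a b x - (ψ x)⁻¹ • (a x *ᵥ grad ψ x)) 0 f x
        + grad f x ⬝ᵥ a x *ᵥ grad g x := by
  simp only [LYstar_eq_secondOrderOp]
  exact secondOrderOp_mul hA _ _ hg hf

lemma sum_pd_mul_pd_neg_log (hsym : ∀ y, (a y).IsSymm)
    (ha : ∀ i j, DifferentiableAt ℝ (fun y => a y i j) x) (hψ : ContDiffAt ℝ 2 ψ x)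
    (hψx : ψ x ≠ 0) :
    ∑ i, ∑ j, pd (fun y => a y i j * pd (fun z => -Real.log (ψ z)) j y) i x
      = grad ψ x ⬝ᵥ a x *ᵥ grad ψ x / ψ x ^ 2
        - ((fun j => ∑ i, pd (fun y => a y j i) i x) ⬝ᵥ grad ψ x + (a x * hess ψ x).trace)
          / ψ x := by
  have hψ' := hψ.differentiableAt (by norm_num)
  have hlog : ∀ j, pd (fun z => -Real.log (ψ z)) j =ᶠ[𝓝 x] fun y => -((ψ y)⁻¹ * pd ψ j y) := by
    intro j
    filter_upwards [hψ.eventually_differentiableAt, hψ.continuousAt.eventually_ne hψx]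
      with y hy hy0 using pd_neg_log hy hy0 j
  have hterm : ∀ i j, pd (fun y => a y i j * pd (fun z => -Real.log (ψ z)) j y) i x
      = -(pd (fun y => a y i j) i x * pd ψ j x) / ψ x
        + a x i j * (pd ψ i x * pd ψ j x / ψ x ^ 2 - pd2 ψ i j x / ψ x) := by
    intro i j
    have hPj := differentiableAt_pd hψ j
    have hinv : DifferentiableAt ℝ (fun y => (ψ y)⁻¹) x := hψ'.inv hψx
    have hev : (fun y => a y i j * pd (fun z => -Real.log (ψ z)) j y)
        =ᶠ[𝓝 x] fun y => a y i j * -((ψ y)⁻¹ * pd ψ j y) :=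
      (hlog j).mono fun y hy => by simp only [hy]
    rw [pd_congr hev, pd_mul (ha i j) (hinv.fun_mul hPj).fun_neg, pd_neg,
      pd_mul hinv hPj, pd_inv hψ' hψx]
    simp only [pd2]
    field_simp
    ring
  have hdiv : ∑ i, ∑ j, pd (fun y => a y i j) i x * pd ψ j x
      = (fun j => ∑ i, pd (fun y => a y j i) i x) ⬝ᵥ grad ψ x := by
    rw [Finset.sum_comm]
    simp only [dotProduct, grad, Finset.sum_mul]
    refine Finset.sum_congr rfl fun j _ => Finset.sum_congr rfl fun i _ => ?_
    simp only [(hsym _).apply]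
  have htr : ∑ i, ∑ j, a x i j * pd2 ψ i j x = (a x * hess ψ x).trace := by
    simp only [trace, diag, mul_apply, hess, of_apply]
    rw [Finset.sum_comm]
    simp only [(hsym x).apply]
  have hquad : ∑ i, ∑ j, a x i j * (pd ψ i x * pd ψ j x) = grad ψ x ⬝ᵥ a x *ᵥ grad ψ x := by
    simp only [dotProduct, mulVec, grad, Finset.mul_sum]
    exact Finset.sum_congr rfl fun i _ => Finset.sum_congr rfl fun j _ => by ring
  simp only [hterm, mul_sub, Finset.sum_add_distrib, Finset.sum_sub_distrib]
  rw [← hdiv, ← htr, ← hquad]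
  simp only [neg_div, Finset.sum_neg_distrib, Finset.sum_div, add_div, mul_div_assoc']
  ring

lemma LYstar_mul_eq_zero {φ : (Fin d → ℝ) → ℝ} {lam : ℝ} (hsym : ∀ y, (a y).IsSymm)
    (ha : ∀ i j, DifferentiableAt ℝ (fun y => a y i j) x) (hψ : ContDiffAt ℝ 2 ψ x)
    (hφ : ContDiffAt ℝ 2 φ x) (hψx : ψ x ≠ 0)
    (hψeig : b x ⬝ᵥ grad ψ x + (1 / 2) * (a x * hess ψ x).trace = -lam * ψ x)
    (hφeig : betaOf a b x ⬝ᵥ grad φ x + (1 / 2) * (a x * hess φ x).trace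
        - cOf a b x * φ x = -lam * φ x) :
    LYstar a b ψ (fun y => φ y * ψ y) x = 0 := by
  have hdiv : (fun j => ∑ i, pd (fun y => a y j i) i x) = betaOf a b x + b x := by
    funext j
    simp only [betaOf, Pi.add_apply]
    ring
  rw [LYstar_mul (hsym x) hφ hψ, LYstar_eq_secondOrderOp, sum_pd_mul_pd_neg_log hsym ha hψ hψx,
    hdiv]
  simp only [secondOrderOp, sub_dotProduct, add_dotProduct, smul_dotProduct, smul_eq_mul]
  rw [(hsym x).mulVec_dotProduct (grad ψ x) (grad φ x),
    (hsym x).mulVec_dotProduct (grad ψ x) (grad ψ x)]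
  field_simp
  linear_combination (2 * ψ x) * (ψ x * hφeig - φ x * hψeig)

end ControlledGenerator

theorem stmt9_general {d : ℕ} (G : Set (Fin d → ℝ)) (hG : IsOpen G)
    (a : (Fin d → ℝ) → Matrix (Fin d) (Fin d) ℝ) (hsym : ∀ x, (a x).IsSymm)
    (ha : ∀ i j, ContDiffOn ℝ 2 (fun y => a y i j) G)
    (b : (Fin d → ℝ) → (Fin d → ℝ))
    (lam : ℝ) (ψ φ : (Fin d → ℝ) → ℝ)
    (hψ : ContDiffOn ℝ 3 ψ G) (hφ : ContDiffOn ℝ 3 φ G)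
    (hψpos : ∀ x ∈ G, 0 < ψ x) (hφpos : ∀ x ∈ G, 0 < φ x)
    (hψeig : ∀ x ∈ G,
      b x ⬝ᵥ grad ψ x + (1 / 2) * (a x * hess ψ x).trace = -lam * ψ x)
    (hφeig : ∀ x ∈ G,
      betaOf a b x ⬝ᵥ grad φ x + (1 / 2) * (a x * hess φ x).trace
        - cOf a b x * φ x = -lam * φ x)
    (Φ : (Fin d → ℝ) → ℝ) (hΦ : Φ = fun x => -Real.log (φ x))
    (η : (Fin d → ℝ) → ℝ) (hη : η = fun x => φ x * ψ x) :
    ∀ f : (Fin d → ℝ) → ℝ, ContDiff ℝ 2 f → HasCompactSupport f → tsupport f ⊆ G →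
      ∀ x ∈ G,
        betaOf a b x ⬝ᵥ grad f x - grad f x ⬝ᵥ (a x).mulVec (grad Φ x)
            + (1 / 2) * (a x * hess f x).trace
          = (1 / η x) * LYstar a b ψ (fun y => η y * f y) x := by
  intro f hf _ _ x hx
  subst hΦ hη
  have hGx := hG.mem_nhds hx
  have hψx : ContDiffAt ℝ 2 ψ x := (hψ.contDiffAt hGx).of_le (by norm_num)
  have hφx : ContDiffAt ℝ 2 φ x := (hφ.contDiffAt hGx).of_le (by norm_num)
  have hax : ∀ i j, DifferentiableAt ℝ (fun y => a y i j) x := fun i j =>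
    ((ha i j).contDiffAt hGx).differentiableAt (by norm_num)
  have hψ0 := (hψpos x hx).ne'
  have hφ0 := (hφpos x hx).ne'
  rw [LYstar_mul (hsym x) (hφx.mul hψx) hf.contDiffAt,
    LYstar_mul_eq_zero hsym hax hψx hφx hψ0 (hψeig x hx) (hφeig x hx),
    grad_mul (hφx.differentiableAt (by norm_num)) (hψx.differentiableAt (by norm_num)),
    grad_neg_log (hφx.differentiableAt (by norm_num)) hφ0]
  simp only [secondOrderOp, mulVec_add, mulVec_smul, mulVec_neg, dotProduct_add, dotProduct_neg,
    dotProduct_smul, sub_dotProduct, smul_dotProduct, smul_eq_mul,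
    dotProduct_comm (a x *ᵥ grad ψ x)]
  field_simp
  ring

/-- with `η := φψ`, `Ψ := −log ψ`, `Φ := −log φ`, the generators are related by
`L_Z f = (1/η) L_Y*(η f)` on `G` for all `f ∈ C²_c(G)`, where
`L_Z f = β·Df − Df·aDΦ + (1/2)tr[a D²f]`. -/
theorem stmt9 {d : ℕ} (G : Set (Fin d → ℝ)) (hG : IsOpen G)
    (a : (Fin d → ℝ) → Matrix (Fin d) (Fin d) ℝ) (hsym : ∀ x, (a x).IsSymm)
    (hapos : ∀ x ∈ G, (a x).PosDef) (ha : ∀ i j, ContDiffOn ℝ 2 (fun y => a y i j) G)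
    (b : (Fin d → ℝ) → (Fin d → ℝ)) (hb : ∀ i, ContDiffOn ℝ 1 (fun y => b y i) G)
    (lam : ℝ) (ψ φ : (Fin d → ℝ) → ℝ)
    (hψ : ContDiffOn ℝ 3 ψ G) (hφ : ContDiffOn ℝ 3 φ G)
    (hψpos : ∀ x ∈ G, 0 < ψ x) (hφpos : ∀ x ∈ G, 0 < φ x)
    (hψeig : ∀ x ∈ G,
      b x ⬝ᵥ grad ψ x + (1 / 2) * (a x * hess ψ x).trace = -lam * ψ x)
    (hφeig : ∀ x ∈ G,
      betaOf a b x ⬝ᵥ grad φ x + (1 / 2) * (a x * hess φ x).trace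
        - cOf a b x * φ x = -lam * φ x)
    (Φ : (Fin d → ℝ) → ℝ) (hΦ : Φ = fun x => -Real.log (φ x))
    (η : (Fin d → ℝ) → ℝ) (hη : η = fun x => φ x * ψ x) :
    ∀ f : (Fin d → ℝ) → ℝ, ContDiff ℝ 2 f → HasCompactSupport f → tsupport f ⊆ G →
      ∀ x ∈ G,
        betaOf a b x ⬝ᵥ grad f x - grad f x ⬝ᵥ (a x).mulVec (grad Φ x)
            + (1 / 2) * (a x * hess f x).trace
          = (1 / η x) * LYstar a b ψ (fun y => η y * f y) x :=
  stmt9_general G hG a hsym ha b lam ψ φ hψ hφ hψpos hφpos hψeig hφeig Φ hΦ η hη
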